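/- For every packed word u of length n, the set of parking functions a of length n with pack(a) = u is nonempty (it contains u itself), and it possesses a greatest element for the lexicographic order on words (the maximal unpacking detass(u) of u). -/

import Mathlib

/-- The rank of the letter `x` in the word `w`: one plus the number of distinct letters
of `w` smaller than `x`. -/
def rank (w : List ℕ) (x : ℕ) : ℕ := ((w.filter (· < x)).dedup).length + 1

/-- The packed word of a word `w`: if the distinct letters occurring in `w` are
`b₁ < b₂ < … < b_k`, each occurrence of `b_j` is replaced by `j`. -/
def pack (w : List ℕ) : List ℕ := w.map (rank w)

/-- A parking function is a word `a = a₁ a₂ ⋯ a_n` over the positive integers such that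
for every `i` with `1 ≤ i ≤ n`, the number of indices `j` with `a_j ≤ i` is at least
`i`. -/
def IsParkingFun (a : List ℕ) : Prop :=
  (∀ x ∈ a, 0 < x) ∧
  ∀ i : ℕ, 1 ≤ i → i ≤ a.length → i ≤ (a.filter (fun x => x ≤ i)).length

/-! A word `b` is a parking function iff every letter `x` of `b` is positive and exceeds the
number of letters of `b` below `x` by at most one. When `pack b = u`, the letters of `b` below `x`
are exactly those packed below `rank b x`, so this bound reads `b ≤ detass u` letter by letter,
where `detass u` replaces each letter `j` of `u` by one plus the number of letters of `u` below `j`.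
Since `detass u` is itself a parking function packing to `u`, it is the lexicographic maximum. -/

section Counting

variable {α β : Type*}

lemma List.countP_lt_lt_countP_lt [LinearOrder α] {l : List α} {x y : α} (hy : y ∈ l)
    (hyx : y < x) : l.countP (· < y) < l.countP (· < x) := by
  have hsub : (l.filter (· < y)).Sublist (l.filter (· < x)) :=
    l.monotone_filter_right fun z hz => by simpa using (of_decide_eq_true hz).trans hyx
  have hne : l.filter (· < y) ≠ l.filter (· < x) := fun h => by
    have : y ∈ l.filter (· < x) := List.mem_filter.2 ⟨hy, by simpa using hyx⟩
    rw [← h, List.mem_filter] at this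
    simp at this
  simp only [List.countP_eq_length_filter]
  exact lt_of_le_of_ne hsub.length_le (mt hsub.eq_of_length hne)

lemma Finset.card_filter_lt_lt_card_filter_lt [LinearOrder α] {s : Finset α} {x y : α}
    (hy : y ∈ s) (hyx : y < x) : (s.filter (· < y)).card < (s.filter (· < x)).card := by
  refine Finset.card_lt_card ((Finset.ssubset_iff_of_subset fun z hz => ?_).2
    ⟨y, Finset.mem_filter.2 ⟨hy, hyx⟩, by simp⟩)
  simp only [Finset.mem_filter] at hz ⊢
  exact ⟨hz.1, hz.2.trans hyx⟩

lemma List.countP_map_lt_of_strictMonoOn [LinearOrder α] [LinearOrder β] {l : List α}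
    {f : α → β} (hf : StrictMonoOn f {y | y ∈ l}) {x : α} (hx : x ∈ l) :
    (l.map f).countP (· < f x) = l.countP (· < x) := by
  rw [List.countP_map]
  exact List.countP_congr fun y hy => by simpa using hf.lt_iff_lt hy hx

lemma List.forall₂_le_imp_eq_or_lex [PartialOrder α] {b a : List α}
    (h : List.Forall₂ (· ≤ ·) b a) : b = a ∨ List.Lex (· < ·) b a := by
  induction h with
  | nil => exact Or.inl rfl
  | cons hxy _ ih =>
    rcases hxy.lt_or_eq with hlt | rfl
    · exact Or.inr (List.Lex.rel hlt)
    · exact ih.imp (congrArg _) List.Lex.cons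

end Counting

lemma rank_eq_card (w : List ℕ) (x : ℕ) : rank w x = (w.toFinset.filter (· < x)).card + 1 := by
  rw [rank, ← List.card_toFinset, List.toFinset_filter]
  simp

lemma rank_strictMonoOn (w : List ℕ) : StrictMonoOn (rank w) {x | x ∈ w} := fun y hy x _ hyx => by
  rw [rank_eq_card, rank_eq_card]
  exact Nat.succ_lt_succ (Finset.card_filter_lt_lt_card_filter_lt (List.mem_toFinset.2 hy) hyx)

lemma rank_le_countP_lt_succ (w : List ℕ) (x : ℕ) : rank w x ≤ w.countP (· < x) + 1 := by
  rw [rank, List.countP_eq_length_filter]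
  exact Nat.succ_le_succ (List.dedup_sublist _).length_le

lemma rank_map_of_strictMonoOn {l : List ℕ} {f : ℕ → ℕ} (hf : StrictMonoOn f {y | y ∈ l})
    {x : ℕ} (hx : x ∈ l) : rank (l.map f) (f x) = rank l x := by
  have himage : (l.map f).toFinset = l.toFinset.image f := by ext; simp
  rw [rank_eq_card, rank_eq_card, himage, Finset.filter_image,
    Finset.card_image_of_injOn (hf.injOn.mono fun y hy => by simp_all)]
  congr 2
  exact Finset.filter_congr fun y hy => hf.lt_iff_lt (List.mem_toFinset.1 hy) hx

lemma pack_map_of_strictMonoOn {l : List ℕ} {f : ℕ → ℕ} (hf : StrictMonoOn f {y | y ∈ l}) :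
    pack (l.map f) = pack l := by
  simp only [pack, List.map_map]
  exact List.map_congr_left fun x hx => rank_map_of_strictMonoOn hf hx

lemma rank_eq_self_of_pack_eq_self {u : List ℕ} (hu : pack u = u) {x : ℕ} (hx : x ∈ u) :
    rank u x = x :=
  List.map_eq_map_iff.1 (hu.trans (List.map_id u).symm) x hx

lemma IsParkingFun.le_length {b : List ℕ} (hb : IsParkingFun b) {x : ℕ} (hx : x ∈ b) :
    x ≤ b.length := by
  have hall : b.countP (· ≤ b.length) = b.length := by
    refine le_antisymm List.countP_le_length ?_
    rw [List.countP_eq_length_filter]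
    exact hb.2 _ (List.length_pos_of_mem hx) le_rfl
  simpa using List.countP_eq_length.1 hall x hx

lemma IsParkingFun.le_countP_lt_succ {b : List ℕ} (hb : IsParkingFun b) {x : ℕ} (hx : x ∈ b) :
    x ≤ b.countP (· < x) + 1 := by
  rcases Nat.lt_or_ge x 2 with _ | hx2
  · omega
  have hcount := hb.2 (x - 1) (by omega) ((Nat.sub_le x 1).trans (hb.le_length hx))
  rw [← List.countP_eq_length_filter] at hcount
  have hshift : b.countP (· ≤ x - 1) = b.countP (· < x) :=
    List.countP_congr fun z _ => by simp only [decide_eq_true_eq]; omega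
  omega

lemma isParkingFun_of_le_countP_lt_succ {b : List ℕ} (hpos : ∀ x ∈ b, 0 < x)
    (hle : ∀ x ∈ b, x ≤ b.countP (· < x) + 1) : IsParkingFun b := by
  refine ⟨hpos, fun i _ hin => ?_⟩
  rw [← List.countP_eq_length_filter]
  by_cases hall : ∀ x ∈ b, x ≤ i
  · rwa [List.countP_eq_length.2 fun x hx => decide_eq_true (hall x hx)]
  obtain ⟨y, hy, hiy⟩ : ∃ y ∈ b, i < y := by simpa using hall
  -- the smallest letter `x > i` has all letters below it in `{1, …, i}`, at least `x - 1 ≥ i` of them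
  obtain ⟨x, hx, hxmin⟩ := (b.toFinset.filter (i < ·)).exists_min_image id
    ⟨y, by simp [hy, hiy]⟩
  simp only [Finset.mem_filter, List.mem_toFinset, id] at hx hxmin
  have hbelow : b.countP (· < x) ≤ b.countP (· ≤ i) :=
    List.countP_mono_left fun z hz hzx => by
      simp only [decide_eq_true_eq] at hzx ⊢
      by_contra hiz
      exact (hxmin z ⟨hz, by omega⟩).not_gt hzx
  have := hle x hx.1
  omega

lemma isParkingFun_of_pack_eq_self {u : List ℕ} (hu : pack u = u) : IsParkingFun u := by
  refine isParkingFun_of_le_countP_lt_succ (fun x hx => ?_) fun x hx => ?_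
  · rw [← rank_eq_self_of_pack_eq_self hu hx, rank]
    exact Nat.succ_pos _
  · simpa only [rank_eq_self_of_pack_eq_self hu hx] using rank_le_countP_lt_succ u x

def detass (u : List ℕ) : List ℕ := u.map fun x => u.countP (· < x) + 1

lemma strictMonoOn_countP_lt_succ (l : List ℕ) :
    StrictMonoOn (fun x => l.countP (· < x) + 1) {x | x ∈ l} := fun _ hy _ _ hyx =>
  Nat.succ_lt_succ (List.countP_lt_lt_countP_lt hy hyx)

lemma isParkingFun_detass (u : List ℕ) : IsParkingFun (detass u) := by
  refine isParkingFun_of_le_countP_lt_succ (by simp [detass]) fun _ hx => ?_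
  obtain ⟨y, hy, rfl⟩ := List.mem_map.1 hx
  rw [detass, List.countP_map_lt_of_strictMonoOn (strictMonoOn_countP_lt_succ u) hy]

lemma pack_detass (u : List ℕ) : pack (detass u) = pack u :=
  pack_map_of_strictMonoOn (strictMonoOn_countP_lt_succ u)

lemma forall₂_le_detass_pack {b : List ℕ} (hb : IsParkingFun b) :
    List.Forall₂ (· ≤ ·) b (detass (pack b)) := by
  unfold detass pack
  rw [List.map_map, List.forall₂_map_right_iff, List.forall₂_same]
  intro x hx
  rw [Function.comp_apply, List.countP_map_lt_of_strictMonoOn (rank_strictMonoOn b) hx]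
  exact hb.le_countP_lt_succ hx

/-- For every packed word `u` of length `n`, the set of parking functions `a` of length
`n` with `pack a = u` is nonempty — it contains `u` itself — and possesses a greatest
element for the lexicographic order (the maximal unpacking `detass u` of `u`). -/
theorem exists_max_unpacking (u : List ℕ) (hu : pack u = u) :
    (IsParkingFun u ∧ pack u = u) ∧
    ∃ a : List ℕ,
      (IsParkingFun a ∧ a.length = u.length ∧ pack a = u) ∧
      ∀ b : List ℕ, IsParkingFun b → b.length = u.length → pack b = u →
        b = a ∨ List.Lex (· < ·) b a := by
  refine ⟨⟨isParkingFun_of_pack_eq_self hu, hu⟩, detass u,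
    ⟨isParkingFun_detass u, List.length_map _, (pack_detass u).trans hu⟩, ?_⟩
  rintro b hb - rfl
  exact List.forall₂_le_imp_eq_or_lex (forall₂_le_detass_pack hb)
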